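/- arXiv:2210.05893 — 9 statements merged into one kernel-verified Lean document; each statement's English description precedes it below -/
import Mathlib

section
/- Fix k ≥ 1, ρ ∈ (0,1)^k with Σ_r ρ_r = 1, a symmetric matrix P ∈ (0,1)^{k×k}, and indices i ≠ j in [k] such that P_{ri} ≠ P_{rj} for at least one r ∈ [k]. Let t_0 = 1/Δ_+(θ_i, θ_j) and let 0 < δ < 1/t_0. Then DR_δ(i) ∩ DR_δ(j) = ∅, and there exists ε > 0 such that ⟨w*, x⟩ > ε for all x ∈ DR_δ(i) and ⟨w*, x⟩ < −ε for all x ∈ DR_δ(j), where w* = ( ln(P_{ri}/P_{rj}), ln((1−P_{ri})/(1−P_{rj})) )_{r∈[k]} ∈ ℝ^{2k}. -/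
open scoped RealInnerProductSpace

/-- The dissonance of `x` relative to community `i` (coordinate `(r,false)` is `x_{1,r}`,
coordinate `(r,true)` is `x_{2,r}`; `0 * Real.log (0 / c) = 0` in Lean, matching the
convention that a term vanishes when the corresponding coordinate is `0`). -/
noncomputable def eta {k : ℕ} (ρ : Fin k → ℝ) (P : Matrix (Fin k) (Fin k) ℝ)
    (i : Fin k) (x : EuclideanSpace ℝ (Fin k × Bool)) : ℝ :=
  (∑ r : Fin k,
    (x (r, false) * Real.log (x (r, false) / (Real.exp 1 * ρ r * P r i))
      + x (r, true) * Real.log (x (r, true) / (Real.exp 1 * ρ r * (1 - P r i))))) + 1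

/-- The δ-dissonance range relative to community `i`. -/
noncomputable def DR {k : ℕ} (ρ : Fin k → ℝ) (P : Matrix (Fin k) (Fin k) ℝ)
    (i : Fin k) (δ : ℝ) : Set (EuclideanSpace ℝ (Fin k × Bool)) :=
  {x | (∀ p, 0 ≤ x p) ∧ eta ρ P i x ≤ δ}

/-- `CH_ξ(μ, ν) = ∑_i [ξ μ_i + (1-ξ) ν_i − μ_i^ξ ν_i^{1-ξ}]`. -/
noncomputable def CH {ι : Type*} [Fintype ι] (ξ : ℝ) (μ ν : ι → ℝ) : ℝ :=
  ∑ i, (ξ * μ i + (1 - ξ) * ν i - μ i ^ ξ * ν i ^ (1 - ξ))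

/-- The Chernoff–Hellinger divergence `Δ_+(μ,ν) = max_{ξ ∈ [0,1]} CH_ξ(μ,ν)`. -/
noncomputable def DeltaPlus {ι : Type*} [Fintype ι] (μ ν : ι → ℝ) : ℝ :=
  sSup ((fun ξ => CH ξ μ ν) '' Set.Icc (0 : ℝ) 1)

/-- `θ_i = (ρ_r P_{ri}, ρ_r (1 − P_{ri}))_{r ∈ [k]}`. -/
noncomputable def theta {k : ℕ} (ρ : Fin k → ℝ) (P : Matrix (Fin k) (Fin k) ℝ)
    (i : Fin k) : Fin k × Bool → ℝ :=
  fun p => if p.2 then ρ p.1 * (1 - P p.1 i) else ρ p.1 * P p.1 i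

/-- `w* = (ln(P_{ri}/P_{rj}), ln((1−P_{ri})/(1−P_{rj})))_{r ∈ [k]}`. -/
noncomputable def wstar {k : ℕ} (P : Matrix (Fin k) (Fin k) ℝ) (i j : Fin k) :
    EuclideanSpace ℝ (Fin k × Bool) :=
  (WithLp.equiv 2 (Fin k × Bool → ℝ)).symm fun p =>
    if p.2 then Real.log ((1 - P p.1 i) / (1 - P p.1 j))
    else Real.log (P p.1 i / P p.1 j)

private lemma log_term_exp (t c : ℝ) (ht : 0 ≤ t) (hc : 0 < c) :
    t * Real.log (t / (Real.exp 1 * c)) = t * Real.log (t / c) - t := by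
  rcases eq_or_lt_of_le ht with h | h
  · simp [← h]
  · have h1 : Real.log (t / (Real.exp 1 * c)) = Real.log t - (1 + Real.log c) := by
      rw [Real.log_div h.ne' (by positivity), Real.log_mul (Real.exp_pos 1).ne' hc.ne',
        Real.log_exp]
    have h2 : Real.log (t / c) = Real.log t - Real.log c := Real.log_div h.ne' hc.ne'
    rw [h1, h2]; ring

private lemma kl_nonneg (t c : ℝ) (ht : 0 ≤ t) (hc : 0 < c) :
    0 ≤ t * Real.log (t / c) - t + c := by
  rcases eq_or_lt_of_le ht with h | h
  · simp [← h, hc.le]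
  · have h1 : Real.log (c / t) ≤ c / t - 1 := Real.log_le_sub_one_of_pos (by positivity)
    have h2 : Real.log (t / c) = - Real.log (c / t) := by
      rw [← Real.log_inv]; congr 1; field_simp
    have h3 : (1 : ℝ) - c / t ≤ Real.log (t / c) := by rw [h2]; linarith
    have h4 := mul_le_mul_of_nonneg_left h3 h.le
    have hct : t * (c / t) = c := by field_simp
    nlinarith

private lemma term_w (t r a b : ℝ) (ht : 0 ≤ t) (hr : 0 < r) (ha : 0 < a) (hb : 0 < b) :
    t * Real.log (a / b) = t * Real.log (t / (r * b)) - t * Real.log (t / (r * a)) := by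
  rcases eq_or_lt_of_le ht with h | h
  · simp [← h]
  · rw [Real.log_div ha.ne' hb.ne', Real.log_div h.ne' (by positivity),
      Real.log_div h.ne' (by positivity), Real.log_mul hr.ne' hb.ne',
      Real.log_mul hr.ne' ha.ne']
    ring

private lemma comb_term (t a b ξ : ℝ) (ht : 0 ≤ t) (ha : 0 < a) (hb : 0 < b) :
    ξ * (t * Real.log (t / a) - t) + (1 - ξ) * (t * Real.log (t / b) - t)
      = t * Real.log (t / (a ^ ξ * b ^ (1 - ξ))) - t := by
  rcases eq_or_lt_of_le ht with h | h
  · simp [← h]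
  · have hg : 0 < a ^ ξ * b ^ (1 - ξ) := by positivity
    rw [Real.log_div h.ne' hg.ne', Real.log_div h.ne' ha.ne', Real.log_div h.ne' hb.ne',
      Real.log_mul (by positivity) (by positivity), Real.log_rpow ha, Real.log_rpow hb]
    ring

theorem stmt1 (k : ℕ) (hk : 1 ≤ k) (ρ : Fin k → ℝ)
    (hρ : ∀ r, ρ r ∈ Set.Ioo (0 : ℝ) 1) (hρsum : ∑ r, ρ r = 1)
    (P : Matrix (Fin k) (Fin k) ℝ) (hPsymm : P.IsSymm)
    (hP : ∀ r s, P r s ∈ Set.Ioo (0 : ℝ) 1)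
    (i j : Fin k) (hij : i ≠ j) (hPij : ∃ r, P r i ≠ P r j)
    (t0 : ℝ) (ht0 : t0 = 1 / DeltaPlus (theta ρ P i) (theta ρ P j))
    (δ : ℝ) (hδ0 : 0 < δ) (hδ : δ < 1 / t0) :
    DR ρ P i δ ∩ DR ρ P j δ = ∅ ∧
      ∃ ε > 0, (∀ x ∈ DR ρ P i δ, ε < ⟪wstar P i j, x⟫) ∧
        (∀ x ∈ DR ρ P j δ, ⟪wstar P i j, x⟫ < -ε) := by
  have hθpos : ∀ (l : Fin k) (p : Fin k × Bool), 0 < theta ρ P l p := by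
    intro l p
    rcases p with ⟨r, b⟩
    cases b <;> simp [theta] <;> nlinarith [(hρ r).1, (hP r l).1, (hP r l).2]
  have hθsum : ∀ l : Fin k, ∑ p, theta ρ P l p = 1 := by
    intro l
    rw [Fintype.sum_prod_type, ← hρsum]
    refine Finset.sum_congr rfl fun r _ => ?_
    rw [Fintype.sum_bool]
    simp [theta]; ring
  -- η in generalized-KL form
  have heta : ∀ (l : Fin k) (x : EuclideanSpace ℝ (Fin k × Bool)), (∀ p, 0 ≤ x p) →
      eta ρ P l x = (∑ p : Fin k × Bool, (x p * Real.log (x p / theta ρ P l p) - x p)) + 1 := by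
    intro l x hx
    unfold eta
    congr 1
    rw [Fintype.sum_prod_type]
    refine Finset.sum_congr rfl fun r _ => ?_
    rw [Fintype.sum_bool]
    have e1 : Real.exp 1 * ρ r * P r l = Real.exp 1 * (ρ r * P r l) := by ring
    have e2 : Real.exp 1 * ρ r * (1 - P r l) = Real.exp 1 * (ρ r * (1 - P r l)) := by ring
    have hp1 : (0:ℝ) < ρ r * P r l := mul_pos (hρ r).1 (hP r l).1
    have hp2 : (0:ℝ) < ρ r * (1 - P r l) := mul_pos (hρ r).1 (by linarith [(hP r l).2])
    rw [e1, e2, log_term_exp _ _ (hx (r, false)) hp1, log_term_exp _ _ (hx (r, true)) hp2]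
    simp [theta]
    ring
  -- closed form of CH at θ's
  have hg : ∀ ξ : ℝ, CH ξ (theta ρ P i) (theta ρ P j)
      = 1 - ∑ p : Fin k × Bool, theta ρ P i p ^ ξ * theta ρ P j p ^ (1 - ξ) := by
    intro ξ
    unfold CH
    rw [Finset.sum_sub_distrib, Finset.sum_add_distrib, ← Finset.mul_sum, ← Finset.mul_sum,
      hθsum i, hθsum j]
    ring
  -- key inequality
  have hkey : ∀ ξ ∈ Set.Icc (0:ℝ) 1, ∀ x : EuclideanSpace ℝ (Fin k × Bool), (∀ p, 0 ≤ x p) →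
      CH ξ (theta ρ P i) (theta ρ P j) ≤ ξ * eta ρ P i x + (1 - ξ) * eta ρ P j x := by
    intro ξ _ x hx
    rw [heta i x hx, heta j x hx, hg ξ]
    have expand : ξ * ((∑ p : Fin k × Bool, (x p * Real.log (x p / theta ρ P i p) - x p)) + 1)
        + (1 - ξ) * ((∑ p : Fin k × Bool, (x p * Real.log (x p / theta ρ P j p) - x p)) + 1)
        = (∑ p : Fin k × Bool, (ξ * (x p * Real.log (x p / theta ρ P i p) - x p)
            + (1 - ξ) * (x p * Real.log (x p / theta ρ P j p) - x p))) + 1 := by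
      rw [Finset.sum_add_distrib, ← Finset.mul_sum, ← Finset.mul_sum]; ring
    rw [expand]
    have hterm : ∀ p ∈ (Finset.univ : Finset (Fin k × Bool)),
        - (theta ρ P i p ^ ξ * theta ρ P j p ^ (1 - ξ))
          ≤ ξ * (x p * Real.log (x p / theta ρ P i p) - x p)
            + (1 - ξ) * (x p * Real.log (x p / theta ρ P j p) - x p) := by
      intro p _
      rw [comb_term _ _ _ _ (hx p) (hθpos i p) (hθpos j p)]
      have := kl_nonneg (x p) (theta ρ P i p ^ ξ * theta ρ P j p ^ (1 - ξ)) (hx p)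
        (by have := hθpos i p; have := hθpos j p; positivity)
      linarith
    have hsum := Finset.sum_le_sum hterm
    rw [Finset.sum_neg_distrib] at hsum
    linarith
  -- continuity and maximiser
  have hcont : Continuous fun ξ : ℝ => CH ξ (theta ρ P i) (theta ρ P j) := by
    unfold CH
    apply continuous_finset_sum
    intro p _
    have h1 : Continuous fun ξ : ℝ => theta ρ P i p ^ ξ :=
      continuous_iff_continuousAt.2 fun _ => Real.continuousAt_const_rpow (hθpos i p).ne'
    have h2 : Continuous fun ξ : ℝ => theta ρ P j p ^ (1 - ξ) :=
      (continuous_iff_continuousAt.2 fun _ =>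
        Real.continuousAt_const_rpow (hθpos j p).ne').comp (continuous_const.sub continuous_id)
    exact ((continuous_id.mul continuous_const).add
      ((continuous_const.sub continuous_id).mul continuous_const)).sub (h1.mul h2)
  obtain ⟨ξs, hξsmem, hmax⟩ :=
    isCompact_Icc.exists_isMaxOn (Set.nonempty_Icc.2 zero_le_one) hcont.continuousOn
  have hmax' : ∀ y ∈ Set.Icc (0:ℝ) 1,
      CH y (theta ρ P i) (theta ρ P j) ≤ CH ξs (theta ρ P i) (theta ρ P j) := fun y hy => hmax hy
  have hΔ : DeltaPlus (theta ρ P i) (theta ρ P j) = CH ξs (theta ρ P i) (theta ρ P j) := by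
    unfold DeltaPlus
    apply le_antisymm
    · refine csSup_le ⟨CH ξs (theta ρ P i) (theta ρ P j), ⟨ξs, hξsmem, rfl⟩⟩ ?_
      rintro y ⟨z, hz, rfl⟩; exact hmax' z hz
    · exact le_csSup ⟨_, by rintro y ⟨z, hz, rfl⟩; exact hmax' z hz⟩ ⟨ξs, hξsmem, rfl⟩
  -- positivity of the divergence
  have hhalf : 0 < CH (1/2) (theta ρ P i) (theta ρ P j) := by
    unfold CH
    obtain ⟨r0, hr0⟩ := hPij
    apply Finset.sum_pos'
    · intro p _
      have ha := hθpos i p; have hb := hθpos j p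
      have h12 : (1:ℝ) - 1/2 = 1/2 := by norm_num
      rw [h12, ← Real.sqrt_eq_rpow, ← Real.sqrt_eq_rpow]
      nlinarith [sq_nonneg (Real.sqrt (theta ρ P i p) - Real.sqrt (theta ρ P j p)),
        Real.sq_sqrt ha.le, Real.sq_sqrt hb.le]
    · refine ⟨(r0, false), Finset.mem_univ _, ?_⟩
      have ha := hθpos i (r0, false); have hb := hθpos j (r0, false)
      have hne : theta ρ P i (r0, false) ≠ theta ρ P j (r0, false) := by
        show ρ r0 * P r0 i ≠ ρ r0 * P r0 j
        exact fun h => hr0 (mul_left_cancel₀ (hρ r0).1.ne' h)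
      have hsne : Real.sqrt (theta ρ P i (r0, false)) ≠ Real.sqrt (theta ρ P j (r0, false)) := by
        intro h
        apply hne
        have := congrArg (fun t : ℝ => t ^ 2) h
        simpa [Real.sq_sqrt ha.le, Real.sq_sqrt hb.le] using this
      have h12 : (1:ℝ) - 1/2 = 1/2 := by norm_num
      rw [h12, ← Real.sqrt_eq_rpow, ← Real.sqrt_eq_rpow]
      nlinarith [sq_pos_of_ne_zero (sub_ne_zero.2 hsne),
        Real.sq_sqrt ha.le, Real.sq_sqrt hb.le]
  have hΔpos : 0 < CH ξs (theta ρ P i) (theta ρ P j) :=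
    lt_of_lt_of_le hhalf (hmax' _ ⟨by norm_num, by norm_num⟩)
  -- δ < Δ
  have hΔδ : δ < CH ξs (theta ρ P i) (theta ρ P j) := by
    rw [ht0, one_div_one_div, hΔ] at hδ
    exact hδ
  -- ξs interior
  have hCH0 : CH (0:ℝ) (theta ρ P i) (theta ρ P j) = 0 := by
    unfold CH; simp
  have hCH1 : CH (1:ℝ) (theta ρ P i) (theta ρ P j) = 0 := by
    unfold CH; simp
  have hξ0 : 0 < ξs := by
    rcases eq_or_lt_of_le hξsmem.1 with h | h
    · rw [← h, hCH0] at hΔpos; linarith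
    · exact h
  have hξ1 : ξs < 1 := by
    rcases eq_or_lt_of_le hξsmem.2 with h | h
    · rw [h, hCH1] at hΔpos; linarith
    · exact h
  -- inner product identity
  have hw : ∀ x : EuclideanSpace ℝ (Fin k × Bool), (∀ p, 0 ≤ x p) →
      ⟪wstar P i j, x⟫ = eta ρ P j x - eta ρ P i x := by
    intro x hx
    rw [heta i x hx, heta j x hx]
    have hip : ⟪wstar P i j, x⟫ = ∑ p : Fin k × Bool, wstar P i j p * x p := by
      simp [PiLp.inner_apply, RCLike.inner_apply, mul_comm]
    rw [hip]
    rw [show ((∑ p : Fin k × Bool, (x p * Real.log (x p / theta ρ P j p) - x p)) + 1)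
        - ((∑ p : Fin k × Bool, (x p * Real.log (x p / theta ρ P i p) - x p)) + 1)
        = ∑ p : Fin k × Bool, (x p * Real.log (x p / theta ρ P j p)
            - x p * Real.log (x p / theta ρ P i p)) from by
      simp only [Finset.sum_sub_distrib]
      ring]
    refine Finset.sum_congr rfl fun p _ => ?_
    rcases p with ⟨r, b⟩
    cases b
    · have hw0 : wstar P i j (r, false) = Real.log (P r i / P r j) := rfl
      have hm : theta ρ P i (r, false) = ρ r * P r i := rfl
      have hn : theta ρ P j (r, false) = ρ r * P r j := rfl
      rw [hw0, hm, hn, mul_comm,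
        term_w (x (r, false)) (ρ r) (P r i) (P r j) (hx _) (hρ r).1 (hP r i).1 (hP r j).1]
    · have hw0 : wstar P i j (r, true) = Real.log ((1 - P r i) / (1 - P r j)) := rfl
      have hm : theta ρ P i (r, true) = ρ r * (1 - P r i) := rfl
      have hn : theta ρ P j (r, true) = ρ r * (1 - P r j) := rfl
      rw [hw0, hm, hn, mul_comm,
        term_w (x (r, true)) (ρ r) (1 - P r i) (1 - P r j) (hx _) (hρ r).1
          (by linarith [(hP r i).2]) (by linarith [(hP r j).2])]
  constructor
  · rw [Set.eq_empty_iff_forall_notMem]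
    rintro x ⟨⟨hx0, hxi⟩, ⟨hx0', hxj⟩⟩
    have hkk := hkey ξs hξsmem x hx0
    nlinarith [mul_le_mul_of_nonneg_left hxi hξ0.le,
      mul_le_mul_of_nonneg_left hxj (by linarith : (0:ℝ) ≤ 1 - ξs)]
  · refine ⟨(CH ξs (theta ρ P i) (theta ρ P j) - δ) / 2, by linarith, ?_, ?_⟩
    · rintro x ⟨hx0, hxi⟩
      have hkk := hkey ξs hξsmem x hx0
      rw [hw x hx0]
      have h1 : CH ξs (theta ρ P i) (theta ρ P j) - δ
          ≤ (1 - ξs) * (eta ρ P j x - eta ρ P i x) := by nlinarith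
      have h2 : 0 < eta ρ P j x - eta ρ P i x := by nlinarith
      nlinarith [mul_le_of_le_one_left h2.le (by linarith : 1 - ξs ≤ 1)]
    · rintro x ⟨hx0, hxj⟩
      have hkk := hkey ξs hξsmem x hx0
      rw [hw x hx0]
      have h1 : CH ξs (theta ρ P i) (theta ρ P j) - δ
          ≤ ξs * (eta ρ P i x - eta ρ P j x) := by nlinarith
      have h2 : 0 < eta ρ P i x - eta ρ P j x := by nlinarith
      nlinarith [mul_le_of_le_one_left h2.le hξ1.le]
end

section
/- Fix k ≥ 1, ρ ∈ (0,1)^k with Σ_r ρ_r = 1, a symmetric matrix P ∈ (0,1)^{k×k}, and indices i ≠ j in [k] such that P_{ri} ≠ P_{rj} for at least one r ∈ [k]. Then Δ_+(θ_i, θ_j) > 0, and every maximizer ξ* ∈ [0,1] of the function ξ ↦ CH_ξ(θ_i, θ_j) satisfies 0 < ξ* < 1. -/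
lemma amgm_le (a b : ℝ) (ha : 0 ≤ a) (hb : 0 ≤ b) :
    a ^ (1/2 : ℝ) * b ^ (1/2 : ℝ) ≤ 1/2 * a + 1/2 * b := by
  rw [← Real.sqrt_eq_rpow, ← Real.sqrt_eq_rpow]
  nlinarith [sq_nonneg (Real.sqrt a - Real.sqrt b), Real.sq_sqrt ha, Real.sq_sqrt hb]

lemma amgm_lt (a b : ℝ) (ha : 0 < a) (hb : 0 < b) (hab : a ≠ b) :
    a ^ (1/2 : ℝ) * b ^ (1/2 : ℝ) < 1/2 * a + 1/2 * b := by
  rw [← Real.sqrt_eq_rpow, ← Real.sqrt_eq_rpow]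
  have hs : Real.sqrt a ≠ Real.sqrt b := fun h => hab (by
    have := congrArg (· ^ 2) h
    simpa [Real.sq_sqrt ha.le, Real.sq_sqrt hb.le] using this)
  nlinarith [pow_two_pos_of_ne_zero (sub_ne_zero.mpr hs), Real.sq_sqrt ha.le, Real.sq_sqrt hb.le]

theorem stmt2 (k : ℕ) (hk : 1 ≤ k) (ρ : Fin k → ℝ)
    (hρ : ∀ r, ρ r ∈ Set.Ioo (0 : ℝ) 1) (hρsum : ∑ r, ρ r = 1)
    (P : Matrix (Fin k) (Fin k) ℝ) (hPsymm : P.IsSymm)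
    (hP : ∀ r s, P r s ∈ Set.Ioo (0 : ℝ) 1)
    (i j : Fin k) (hij : i ≠ j) (hPij : ∃ r, P r i ≠ P r j) :
    0 < DeltaPlus (theta ρ P i) (theta ρ P j) ∧
      ∀ ξstar ∈ Set.Icc (0 : ℝ) 1,
        (∀ ξ ∈ Set.Icc (0 : ℝ) 1,
          CH ξ (theta ρ P i) (theta ρ P j) ≤ CH ξstar (theta ρ P i) (theta ρ P j)) →
        ξstar ∈ Set.Ioo (0 : ℝ) 1 := by
  set μ := theta ρ P i with hμdef
  set ν := theta ρ P j with hνdef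
  have hμ : ∀ p, 0 < μ p := by
    rintro ⟨r, b⟩
    cases b <;> simp [hμdef, theta] <;>
      [exact mul_pos (hρ r).1 (hP r i).1;
       exact mul_pos (hρ r).1 (by linarith [(hP r i).2])]
  have hν : ∀ p, 0 < ν p := by
    rintro ⟨r, b⟩
    cases b <;> simp [hνdef, theta] <;>
      [exact mul_pos (hρ r).1 (hP r j).1;
       exact mul_pos (hρ r).1 (by linarith [(hP r j).2])]
  obtain ⟨r, hr⟩ := hPij
  have hne : μ (r, false) ≠ ν (r, false) := by
    simp only [hμdef, hνdef, theta, Bool.false_eq_true, if_false]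
    intro h
    exact hr (mul_left_cancel₀ (ne_of_gt (hρ r).1) h)
  -- CH at 1/2 is positive
  have hhalf : 0 < CH (1/2) μ ν := by
    unfold CH
    have h12 : (1 : ℝ) - 1/2 = 1/2 := by norm_num
    rw [h12]
    apply Finset.sum_pos'
    · intro p _
      have := amgm_le (μ p) (ν p) (hμ p).le (hν p).le
      linarith
    · refine ⟨(r, false), Finset.mem_univ _, ?_⟩
      have := amgm_lt (μ (r,false)) (ν (r,false)) (hμ _) (hν _) hne
      linarith
  have hCH0 : CH 0 μ ν = 0 := by
    unfold CH
    simp [Real.rpow_zero, Real.rpow_one]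
  have hCH1 : CH 1 μ ν = 0 := by
    unfold CH
    simp [Real.rpow_zero, Real.rpow_one]
  -- bounded above
  have hbdd : ∀ ξ ∈ Set.Icc (0:ℝ) 1, CH ξ μ ν ≤ ∑ p, (μ p + ν p) := by
    rintro ξ ⟨h0, h1⟩
    unfold CH
    apply Finset.sum_le_sum
    intro p _
    have h1' : ξ * μ p ≤ μ p := by nlinarith [(hμ p).le]
    have h2' : (1 - ξ) * ν p ≤ ν p := by nlinarith [(hν p).le]
    have h3' : 0 ≤ μ p ^ ξ * ν p ^ (1 - ξ) :=
      mul_nonneg (Real.rpow_nonneg (hμ p).le _) (Real.rpow_nonneg (hν p).le _)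
    linarith
  have hBdd : BddAbove ((fun ξ => CH ξ μ ν) '' Set.Icc (0 : ℝ) 1) := by
    refine ⟨∑ p, (μ p + ν p), ?_⟩
    rintro x ⟨ξ, hξ, rfl⟩
    exact hbdd ξ hξ
  constructor
  · have hmem : CH (1/2) μ ν ∈ (fun ξ => CH ξ μ ν) '' Set.Icc (0 : ℝ) 1 :=
      ⟨1/2, by norm_num, rfl⟩
    exact lt_of_lt_of_le hhalf (le_csSup hBdd hmem)
  · rintro ξstar ⟨hs0, hs1⟩ hmax
    have hge : CH (1/2) μ ν ≤ CH ξstar μ ν := hmax (1/2) (by norm_num)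
    constructor
    · rcases lt_or_eq_of_le hs0 with h | h
      · exact h
      · exfalso; rw [← h] at hge; linarith
    · rcases lt_or_eq_of_le hs1 with h | h
      · exact h
      · exfalso; rw [h] at hge; linarith
end

section
/- Define y(p,q) = ln((1−q)/(1−p)) / ln(p/q) for p, q ∈ (0,1) with p ≠ q. Then: (i) for all 0 < q < p < 1, y(p,q) < p/(1−p); and (ii) for all 0 < p < q < 1, y(p,q) > p/(1−p). -/
/-!
Both inequalities are the strict positivity of the Kullback–Leibler divergence between the
Bernoulli laws with parameters `p` and `q`, i.e. `(1 - p) log ((1 - q)/(1 - p)) < p log (p/q)`,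
which follows from `log x < x - 1` applied to `(1 - q)/(1 - p)` and to `q/p`. Dividing by
`(1 - p) log (p/q)` gives (i) when `q < p` and, since the logarithm is then negative, (ii) when
`p < q`.
-/

/-- `y(p,q) = ln((1−q)/(1−p)) / ln(p/q)`. -/
noncomputable def yval (p q : ℝ) : ℝ :=
  Real.log ((1 - q) / (1 - p)) / Real.log (p / q)

open Real

lemma mul_log_div_lt_sub {a b : ℝ} (ha : 0 < a) (hb : 0 < b) (hne : a ≠ b) :
    a * log (b / a) < b - a := by
  have hlog : log (b / a) < b / a - 1 :=
    log_lt_sub_one_of_pos (div_pos hb ha) fun h => hne ((div_eq_one_iff_eq ha.ne').mp h).symm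
  calc a * log (b / a) < a * (b / a - 1) := mul_lt_mul_of_pos_left hlog ha
    _ = b - a := by field_simp

lemma one_sub_mul_log_lt_mul_log {p q : ℝ} (hp0 : 0 < p) (hp1 : p < 1) (hq0 : 0 < q)
    (hq1 : q < 1) (hne : p ≠ q) :
    (1 - p) * log ((1 - q) / (1 - p)) < p * log (p / q) := by
  have h₁ := mul_log_div_lt_sub (sub_pos.mpr hp1) (sub_pos.mpr hq1) (by contrapose! hne; linarith)
  have h₂ := mul_log_div_lt_sub hp0 hq0 hne
  rw [← inv_div, log_inv] at h₂
  linarith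

theorem stmt6 :
    (∀ p q : ℝ, 0 < q → q < p → p < 1 → yval p q < p / (1 - p)) ∧
    (∀ p q : ℝ, 0 < p → p < q → q < 1 → p / (1 - p) < yval p q) := by
  constructor
  · intro p q hq0 hqp hp1
    have hlog : 0 < log (p / q) := log_pos ((one_lt_div hq0).mpr hqp)
    have gibbs := one_sub_mul_log_lt_mul_log (hq0.trans hqp) hp1 hq0 (hqp.trans hp1) hqp.ne'
    rw [yval, div_lt_div_iff₀ hlog (sub_pos.mpr hp1)]
    linarith
  · intro p q hp0 hpq hq1
    have hp1 := hpq.trans hq1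
    have hlog : log (p / q) < 0 :=
      log_neg (div_pos hp0 (hp0.trans hpq)) ((div_lt_one (hp0.trans hpq)).mpr hpq)
    have gibbs := one_sub_mul_log_lt_mul_log hp0 hp1 (hp0.trans hpq) hq1 hpq.ne
    rw [yval, lt_div_iff_of_neg hlog, div_mul_eq_mul_div, lt_div_iff₀ (sub_pos.mpr hp1)]
    linarith
end

section
/- Define y(p,q) = ln((1−q)/(1−p)) / ln(p/q) for p, q ∈ (0,1) with p ≠ q. Fix q ∈ (0,1). Then for all p₁, p₂ ∈ (0,1) with p₁ < p₂, p₁ ≠ q, and p₂ ≠ q, one has y(p₁,q) < y(p₂,q); that is, p ↦ y(p,q) is strictly increasing on (0,1) \ {q}. In particular, if p₁ ≠ p₂ and both differ from q, then y(p₁,q) ≠ y(p₂,q). -/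
open Real Set

noncomputable def negLogOneSubExp (u : ℝ) : ℝ := -log (1 - exp u)

lemma hasDerivAt_negLogOneSubExp {u : ℝ} (hu : u ≠ 0) :
    HasDerivAt negLogOneSubExp (exp u / (1 - exp u)) u := by
  have hne : 1 - exp u ≠ 0 := sub_ne_zero.mpr fun h => hu (exp_eq_one_iff u |>.mp h.symm)
  have h := (((hasDerivAt_exp u).const_sub 1).log hne).neg
  rw [neg_div, neg_neg] at h
  exact h

lemma strictMonoOn_exp_div_one_sub_exp :
    StrictMonoOn (fun u => exp u / (1 - exp u)) (Iio 0) := by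
  intro a _ b hb hab
  have hb1 : exp b < 1 := exp_lt_one_iff.mpr hb
  have hexp : exp a < exp b := exp_lt_exp.mpr hab
  have ha0 : 0 < exp a := exp_pos a
  simp only
  rw [div_lt_div_iff₀ (by linarith) (by linarith)]
  nlinarith

lemma strictConvexOn_negLogOneSubExp : StrictConvexOn ℝ (Iio 0) negLogOneSubExp := by
  apply StrictMonoOn.strictConvexOn_of_deriv (convex_Iio 0)
  · exact fun u hu => (hasDerivAt_negLogOneSubExp hu.ne).continuousAt.continuousWithinAt
  · rw [interior_Iio]
    refine strictMonoOn_exp_div_one_sub_exp.congr fun u hu => ?_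
    exact ((hasDerivAt_negLogOneSubExp (mem_Iio.mp hu).ne).deriv).symm

lemma yval_eq_secant_slope {p q : ℝ} (hp : 0 < p) (hq : 0 < q) (hp1 : p ≠ 1) (hq1 : q ≠ 1) :
    yval p q = (negLogOneSubExp (log p) - negLogOneSubExp (log q)) / (log p - log q) := by
  rw [yval, negLogOneSubExp, negLogOneSubExp, exp_log hp, exp_log hq,
    log_div (sub_ne_zero.mpr hq1.symm) (sub_ne_zero.mpr hp1.symm), log_div hp.ne' hq.ne']
  ring

lemma yval_strictMonoOn {q : ℝ} (hq : q ∈ Ioo (0 : ℝ) 1) :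
    StrictMonoOn (fun p => yval p q) (Ioo 0 1 \ {q}) := by
  rintro p₁ ⟨hp₁, hp₁q⟩ p₂ ⟨hp₂, hp₂q⟩ hlt
  simp only
  rw [yval_eq_secant_slope hp₁.1 hq.1 hp₁.2.ne hq.2.ne,
    yval_eq_secant_slope hp₂.1 hq.1 hp₂.2.ne hq.2.ne]
  exact strictConvexOn_negLogOneSubExp.secant_strict_mono
    (log_neg hq.1 hq.2) (log_neg hp₁.1 hp₁.2) (log_neg hp₂.1 hp₂.2)
    (fun h => hp₁q (log_injOn_pos hp₁.1 hq.1 h)) (fun h => hp₂q (log_injOn_pos hp₂.1 hq.1 h))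
    (log_lt_log hp₁.1 hlt)

theorem stmt7 (q : ℝ) (hq : q ∈ Set.Ioo (0 : ℝ) 1) :
    (∀ p₁ p₂ : ℝ, p₁ ∈ Set.Ioo (0 : ℝ) 1 → p₂ ∈ Set.Ioo (0 : ℝ) 1 →
      p₁ < p₂ → p₁ ≠ q → p₂ ≠ q → yval p₁ q < yval p₂ q) ∧
    (∀ p₁ p₂ : ℝ, p₁ ∈ Set.Ioo (0 : ℝ) 1 → p₂ ∈ Set.Ioo (0 : ℝ) 1 →
      p₁ ≠ p₂ → p₁ ≠ q → p₂ ≠ q → yval p₁ q ≠ yval p₂ q) :=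
  ⟨fun _ _ hp₁ hp₂ hlt hp₁q hp₂q => yval_strictMonoOn hq ⟨hp₁, hp₁q⟩ ⟨hp₂, hp₂q⟩ hlt,
    fun _ _ hp₁ hp₂ hne hp₁q hp₂q =>
      (yval_strictMonoOn hq).injOn.ne ⟨hp₁, hp₁q⟩ ⟨hp₂, hp₂q⟩ hne⟩
end

section
/- Let p₁, p₂, q ∈ (0,1) be not all equal and let ρ ∈ (0,1). For y > 0 define the 2×2 real matrix A'(y) = [[p₁−y(1−p₁), q−y(1−q)], [q−y(1−q), p₂−y(1−p₂)]] · diag(ρ, 1−ρ). Then there exists a set 𝒴 ⊆ ℝ with |𝒴| ≤ 3 such that for every y > 0 with y ∉ 𝒴, the matrix A'(y) has two distinct nonzero real eigenvalues; equivalently, det(A'(y)) ≠ 0 and (tr A'(y))² ≠ 4 det(A'(y)). -/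
/-- The matrix `A'(y)` from the censored SBM with two communities:
the signed-encoding matrix multiplied by `diag(ρ, 1−ρ)`. -/
noncomputable def Aprime (p₁ p₂ q ρ y : ℝ) : Matrix (Fin 2) (Fin 2) ℝ :=
  !![p₁ - y * (1 - p₁), q - y * (1 - q); q - y * (1 - q), p₂ - y * (1 - p₂)] *
    Matrix.diagonal ![ρ, 1 - ρ]

open Polynomial in
theorem stmt9 (p₁ p₂ q ρ : ℝ)
    (hp₁ : p₁ ∈ Set.Ioo (0 : ℝ) 1) (hp₂ : p₂ ∈ Set.Ioo (0 : ℝ) 1)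
    (hq : q ∈ Set.Ioo (0 : ℝ) 1) (hρ : ρ ∈ Set.Ioo (0 : ℝ) 1)
    (hne : ¬ (p₁ = p₂ ∧ p₂ = q)) :
    ∃ Y : Finset ℝ, Y.card ≤ 3 ∧
      ∀ y : ℝ, 0 < y → y ∉ Y →
        (Aprime p₁ p₂ q ρ y).det ≠ 0 ∧
        (Aprime p₁ p₂ q ρ y).trace ^ 2 ≠ 4 * (Aprime p₁ p₂ q ρ y).det := by
  obtain ⟨hp₁0, hp₁1⟩ := hp₁
  obtain ⟨hp₂0, hp₂1⟩ := hp₂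
  obtain ⟨hq0, hq1⟩ := hq
  obtain ⟨hρ0, hρ1⟩ := hρ
  set a₂ : ℝ := (1 - p₁) * (1 - p₂) - (1 - q) ^ 2 with ha₂
  set a₁ : ℝ := -((p₁ * (1 - p₂) + p₂ * (1 - p₁)) - 2 * q * (1 - q)) with ha₁
  set a₀ : ℝ := p₁ * p₂ - q ^ 2 with ha₀
  set P : ℝ[X] := C a₂ * X ^ 2 + C a₁ * X + C a₀ with hPdef
  have hP : P ≠ 0 := by
    intro h
    have h2 : a₂ = 0 := by
      have := congrArg (fun p => coeff p 2) h
      simpa [hPdef, coeff_one, coeff_X] using this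
    have h0 : a₀ = 0 := by
      have := congrArg (fun p => coeff p 0) h
      simpa [hPdef] using this
    apply hne
    have hsum : p₁ + p₂ = 2 * q := by nlinarith [h2, h0]
    have hdiff : (p₁ - p₂) ^ 2 = 0 := by nlinarith [h0]
    have : p₁ = p₂ := by nlinarith [hdiff]
    constructor
    · exact this
    · nlinarith [this]
  refine ⟨P.roots.toFinset ∪ {q / (1 - q)}, ?_, ?_⟩
  · calc (P.roots.toFinset ∪ {q / (1 - q)}).card
        ≤ P.roots.toFinset.card + ({q / (1 - q)} : Finset ℝ).card :=
          Finset.card_union_le _ _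
      _ ≤ P.roots.card + 1 := by
          have := Multiset.toFinset_card_le P.roots
          simp only [Finset.card_singleton]
          omega
      _ ≤ P.natDegree + 1 := by
          have := Polynomial.card_roots' P
          omega
      _ ≤ 3 := by
          have : P.natDegree ≤ 2 := Polynomial.natDegree_quadratic_le
          omega
  · intro y hy hyY
    have hyR : y ∉ P.roots.toFinset := fun h => hyY (Finset.mem_union_left _ h)
    have hyq : y ≠ q / (1 - q) := by
      intro h
      exact hyY (Finset.mem_union_right _ (by simp [h]))
    have hPy : P.eval y ≠ 0 := by
      intro h
      exact hyR (Multiset.mem_toFinset.2 ((mem_roots hP).2 h))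
    have h1q : (1 : ℝ) - q ≠ 0 := by linarith
    have hc : q - y * (1 - q) ≠ 0 := by
      intro h
      apply hyq
      field_simp
      linarith
    have hA : Aprime p₁ p₂ q ρ y =
        !![ρ * (p₁ - y * (1 - p₁)), (1 - ρ) * (q - y * (1 - q));
           ρ * (q - y * (1 - q)), (1 - ρ) * (p₂ - y * (1 - p₂))] := by
      ext i j
      rw [Aprime, Matrix.mul_diagonal]
      fin_cases i <;> fin_cases j <;> simp <;> ring
    have hdet : (Aprime p₁ p₂ q ρ y).det =
        ρ * (1 - ρ) *
          ((p₁ - y * (1 - p₁)) * (p₂ - y * (1 - p₂)) - (q - y * (1 - q)) ^ 2) := by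
      rw [hA, Matrix.det_fin_two_of]; ring
    have htr : (Aprime p₁ p₂ q ρ y).trace =
        ρ * (p₁ - y * (1 - p₁)) + (1 - ρ) * (p₂ - y * (1 - p₂)) := by
      rw [hA, Matrix.trace_fin_two]; simp
    have heval : P.eval y =
        (p₁ - y * (1 - p₁)) * (p₂ - y * (1 - p₂)) - (q - y * (1 - q)) ^ 2 := by
      simp [hPdef, ha₂, ha₁, ha₀]
      ring
    have hρρ : 0 < ρ * (1 - ρ) := mul_pos hρ0 (by linarith)
    constructor
    · rw [hdet, ← heval]
      exact mul_ne_zero (ne_of_gt hρρ) hPy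
    · rw [hdet, htr]
      intro h
      have hc2 : 0 < (q - y * (1 - q)) ^ 2 := by positivity
      generalize (p₁ - y * (1 - p₁)) = a at h
      generalize (p₂ - y * (1 - p₂)) = b at h
      generalize (q - y * (1 - q)) = c at h hc2
      nlinarith [sq_nonneg (ρ * a - (1 - ρ) * b), mul_pos hρρ hc2]
end

section
/- Let p, q ∈ (0,1) with p ≠ q, let ρ ∈ (0,1), set p₁ = p and p₂ = q, and let y = y(p,q) = ln((1−q)/(1−p)) / ln(p/q). Then the 2×2 real matrix A'(y) = [[p₁−y(1−p₁), q−y(1−q)], [q−y(1−q), p₂−y(1−p₂)]] · diag(ρ, 1−ρ) has two distinct nonzero real eigenvalues; equivalently, det(A'(y)) ≠ 0 and (tr A'(y))² ≠ 4 det(A'(y)). -/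
/-!
Write `a = p - y(1-p)` and `b = q - y(1-q)`, so that `A'(y) = [[a, b], [b, b]] · diag(ρ, 1-ρ)`.
Then `det A'(y) = ρ(1-ρ) b (a - b)` and `(tr A'(y))² - 4 det A'(y) = (aρ - b(1-ρ))² + 4b²ρ(1-ρ)`,
so everything reduces to `a ≠ b` and `b ≠ 0`. The first holds because `a - b = (p - q)(1 + y)`
with `y > 0`. For the second, the defining relation `y ln(p/q) = ln((1-q)/(1-p))` gives
`b ln(p/q) = q ln(p/q) + (1-q) ln((1-p)/(1-q))`, which is minus the Kullback–Leibler divergence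
of `Bernoulli(p)` from `Bernoulli(q)`, hence negative.
-/

section SymmMulDiagonal

variable {R : Type*}

theorem det_symm_mul_diagonal [CommRing R] (a b c r s : R) :
    (!![a, b; b, c] * Matrix.diagonal ![r, s]).det = (a * c - b ^ 2) * (r * s) := by
  rw [Matrix.det_mul, Matrix.det_fin_two_of, Matrix.det_diagonal, Fin.prod_univ_two]
  simp only [Matrix.cons_val_zero, Matrix.cons_val_one]
  ring

theorem trace_symm_mul_diagonal [CommRing R] (a b c r s : R) :
    (!![a, b; b, c] * Matrix.diagonal ![r, s]).trace = a * r + c * s := by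
  rw [Matrix.trace_fin_two, Matrix.mul_diagonal, Matrix.mul_diagonal]
  simp

theorem trace_sq_sub_four_det_symm_mul_diagonal [CommRing R] (a b c r s : R) :
    (!![a, b; b, c] * Matrix.diagonal ![r, s]).trace ^ 2
        - 4 * (!![a, b; b, c] * Matrix.diagonal ![r, s]).det
      = (a * r - c * s) ^ 2 + 4 * b ^ 2 * (r * s) := by
  rw [trace_symm_mul_diagonal, det_symm_mul_diagonal]
  ring

theorem trace_sq_ne_four_det_symm_mul_diagonal [Field R] [LinearOrder R] [IsStrictOrderedRing R]
    {a b c r s : R} (hb : b ≠ 0) (hr : 0 < r) (hs : 0 < s) :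
    (!![a, b; b, c] * Matrix.diagonal ![r, s]).trace ^ 2
      ≠ 4 * (!![a, b; b, c] * Matrix.diagonal ![r, s]).det := by
  rw [← sub_ne_zero, trace_sq_sub_four_det_symm_mul_diagonal]
  have : 0 < 4 * b ^ 2 * (r * s) := by positivity
  exact (add_pos_of_nonneg_of_pos (sq_nonneg _) this).ne'

end SymmMulDiagonal

section BinaryDivergence

open Real

variable {p q : ℝ}

theorem mul_log_div_add_mul_log_one_sub_div_neg (hp : p ∈ Set.Ioo (0 : ℝ) 1)
    (hq : q ∈ Set.Ioo (0 : ℝ) 1) (hpq : p ≠ q) :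
    q * log (p / q) + (1 - q) * log ((1 - p) / (1 - q)) < 0 := by
  obtain ⟨hp0, hp1⟩ := hp
  obtain ⟨hq0, hq1⟩ := hq
  have hq1' : 0 < 1 - q := sub_pos.2 hq1
  have h₁ : log (p / q) < p / q - 1 :=
    log_lt_sub_one_of_pos (by positivity) (by rwa [Ne, div_eq_one_iff_eq hq0.ne'])
  have h₂ : log ((1 - p) / (1 - q)) < (1 - p) / (1 - q) - 1 :=
    log_lt_sub_one_of_pos (div_pos (sub_pos.2 hp1) hq1')
      (by rw [Ne, div_eq_one_iff_eq hq1'.ne']; exact fun h => hpq (by linarith))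
  calc q * log (p / q) + (1 - q) * log ((1 - p) / (1 - q))
      < q * (p / q - 1) + (1 - q) * ((1 - p) / (1 - q) - 1) := by gcongr
    _ = 0 := by field_simp; ring

theorem log_div_ne_zero (hp : 0 < p) (hq : 0 < q) (hpq : p ≠ q) : log (p / q) ≠ 0 := by
  rw [Ne, log_eq_zero]
  rintro (h | h | h)
  · exact (div_pos hp hq).ne' h
  · exact hpq ((div_eq_one_iff_eq hq.ne').1 h)
  · linarith [div_pos hp hq]

theorem yval_pos (hp : p ∈ Set.Ioo (0 : ℝ) 1) (hq : q ∈ Set.Ioo (0 : ℝ) 1) (hpq : p ≠ q) :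
    0 < yval p q := by
  obtain ⟨hp0, hp1⟩ := hp
  obtain ⟨hq0, hq1⟩ := hq
  have hp1' : 0 < 1 - p := sub_pos.2 hp1
  have hq1' : 0 < 1 - q := sub_pos.2 hq1
  rcases hpq.lt_or_gt with hlt | hlt
  · exact div_pos_of_neg_of_neg
      (log_neg (div_pos hq1' hp1') ((div_lt_one hp1').2 (by linarith)))
      (log_neg (div_pos hp0 hq0) ((div_lt_one hq0).2 hlt))
  · exact div_pos
      (log_pos ((one_lt_div hp1').2 (by linarith)))
      (log_pos ((one_lt_div hq0).2 hlt))

theorem sub_yval_mul_one_sub_ne_zero (hp : p ∈ Set.Ioo (0 : ℝ) 1)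
    (hq : q ∈ Set.Ioo (0 : ℝ) 1) (hpq : p ≠ q) :
    q - yval p q * (1 - q) ≠ 0 := by
  have hL := log_div_ne_zero hp.1 hq.1 hpq
  have hmul : (q - yval p q * (1 - q)) * log (p / q)
      = q * log (p / q) + (1 - q) * log ((1 - p) / (1 - q)) := by
    rw [sub_mul, mul_assoc, mul_comm (1 - q), ← mul_assoc, yval, div_mul_cancel₀ _ hL,
      log_div (sub_pos.2 hq.2).ne' (sub_pos.2 hp.2).ne',
      log_div (sub_pos.2 hp.2).ne' (sub_pos.2 hq.2).ne']
    ring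
  intro h
  have := mul_log_div_add_mul_log_one_sub_div_neg hp hq hpq
  rw [← hmul, h, zero_mul] at this
  exact lt_irrefl 0 this

end BinaryDivergence

theorem stmt10 (p q ρ : ℝ)
    (hp : p ∈ Set.Ioo (0 : ℝ) 1) (hq : q ∈ Set.Ioo (0 : ℝ) 1) (hpq : p ≠ q)
    (hρ : ρ ∈ Set.Ioo (0 : ℝ) 1) :
    (Aprime p q q ρ (yval p q)).det ≠ 0 ∧
    (Aprime p q q ρ (yval p q)).trace ^ 2 ≠ 4 * (Aprime p q q ρ (yval p q)).det := by
  set y := yval p q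
  have hb : q - y * (1 - q) ≠ 0 := sub_yval_mul_one_sub_ne_zero hp hq hpq
  have hab : p - y * (1 - p) - (q - y * (1 - q)) ≠ 0 := by
    rw [show p - y * (1 - p) - (q - y * (1 - q)) = (p - q) * (1 + y) by ring]
    exact mul_ne_zero (sub_ne_zero.2 hpq) (by linarith [yval_pos hp hq hpq])
  have hρ' : 0 < 1 - ρ := sub_pos.2 hρ.2
  refine ⟨?_, trace_sq_ne_four_det_symm_mul_diagonal hb hρ.1 hρ'⟩
  rw [Aprime, det_symm_mul_diagonal,
    show ∀ a b : ℝ, a * b - b ^ 2 = (a - b) * b from fun a b => by ring]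
  exact mul_ne_zero (mul_ne_zero hab hb) (mul_pos hρ.1 hρ').ne'
end

section
/- Let k ≥ 1, ρ ∈ (0,1)^k, and let P ∈ (0,1)^{k×k} be a symmetric matrix. Suppose the matrix P · diag(ρ) has k distinct nonzero eigenvalues. Then there exists a finite set 𝒴 ⊆ ℝ such that for every y > 0 with y ∉ 𝒴, the matrix P^{(y)} with entries P^{(y)}_{ij} = ρ_j (P_{ij} − y(1−P_{ij})) has k distinct nonzero eigenvalues. -/
/-- `P^{(y)}_{ij} = ρ_j (P_{ij} − y(1−P_{ij}))`; note `P^{(0)} = P · diag(ρ)`. -/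
noncomputable def Pmat {k : ℕ} (ρ : Fin k → ℝ) (P : Matrix (Fin k) (Fin k) ℝ)
    (y : ℝ) : Matrix (Fin k) (Fin k) ℝ :=
  Matrix.of fun i j => ρ j * (P i j - y * (1 - P i j))

/-- The characteristic polynomial of a real matrix, viewed over `ℂ`. -/
noncomputable def charpolyC {k : ℕ} (M : Matrix (Fin k) (Fin k) ℝ) : Polynomial ℂ :=
  M.charpoly.map (algebraMap ℝ ℂ)

/-!
The family `P^{(y)} = A + y B`, with `A = P · diag(ρ)` and `B = (P - 𝟙) · diag(ρ)`, is affine in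
`y`, so its characteristic polynomial is the specialisation at `t = y` of one monic polynomial
`G ∈ ℝ[t][X]`. The eigenvalues of `P^{(y)}` are distinct iff this specialisation is separable,
i.e. iff the resultant of `G` and `∂G/∂X`, a polynomial in `t`, does not vanish at `y`; they are
nonzero iff the constant coefficient of `G`, also a polynomial in `t`, does not vanish at `y`.
Both polynomials are nonzero at `t = 0` by hypothesis, hence have finitely many roots.
-/

open Polynomial

namespace Polynomial

lemma Monic.resultant_natDegree_of_natDegree_le {R : Type*} [CommRing R] {f g : R[X]}
    (hf : f.Monic) {n : ℕ} (hn : g.natDegree ≤ n) :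
    resultant f g f.natDegree n = resultant f g := by
  obtain ⟨j, rfl⟩ := Nat.exists_eq_add_of_le hn
  rw [resultant_add_right_deg _ _ _ _ j le_rfl, hf.coeff_natDegree, one_pow, one_mul]

variable {K : Type*} [Field K]

lemma Monic.resultant_derivative_ne_zero_iff {f : K[X]} (hf : f.Monic) {n : ℕ}
    (hn : f.derivative.natDegree ≤ n) :
    resultant f f.derivative f.natDegree n ≠ 0 ↔ f.Separable := by
  rw [hf.resultant_natDegree_of_natDegree_le hn, ← isUnit_iff_ne_zero,
    isUnit_resultant_iff_isCoprime hf, Separable]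

lemma finite_setOf_coeff_map_evalRingHom_eq_zero {G : K[X][X]} {i : ℕ} {a₀ : K}
    (h₀ : (G.map (evalRingHom a₀)).coeff i ≠ 0) :
    {a : K | (G.map (evalRingHom a)).coeff i = 0}.Finite := by
  simp only [coeff_map, coe_evalRingHom] at h₀ ⊢
  exact finite_setOfPred_isRoot fun h ↦ h₀ (by rw [h, eval_zero])

lemma Monic.finite_setOf_not_separable_map_evalRingHom {G : K[X][X]} (hG : G.Monic) {a₀ : K}
    (h₀ : (G.map (evalRingHom a₀)).Separable) :
    {a : K | ¬(G.map (evalRingHom a)).Separable}.Finite := by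
  -- The sizes are those of `G` and `G'` themselves, so that `D` commutes with specialisation
  -- even where the degree of the specialised derivative drops.
  set D := resultant G G.derivative G.natDegree G.derivative.natDegree
  have hD (a : K) : D.eval a ≠ 0 ↔ (G.map (evalRingHom a)).Separable := by
    have hn : (G.map (evalRingHom a)).derivative.natDegree ≤ G.derivative.natDegree := by
      rw [derivative_map]
      exact natDegree_map_le
    rw [← (hG.map (evalRingHom a)).resultant_derivative_ne_zero_iff hn, hG.natDegree_map,
      derivative_map, resultant_map_map, coe_evalRingHom]
  simp only [← hD, not_not]
  exact finite_setOfPred_isRoot fun h ↦ (hD a₀).2 h₀ (by rw [h, eval_zero])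

end Polynomial

lemma Matrix.charpoly_add_smul_eq_map_evalRingHom {n R : Type*} [Fintype n] [DecidableEq n]
    [CommRing R] (A B : Matrix n n R) (y : R) :
    (A + y • B).charpoly = (A.map C + (X : R[X]) • B.map C).charpoly.map (evalRingHom y) := by
  rw [← Matrix.charpoly_map]
  congr 1
  ext i j
  simp only [Matrix.add_apply, Matrix.smul_apply, Matrix.map_apply, smul_eq_mul, coe_evalRingHom,
    eval_add, eval_mul, eval_C, eval_X]

lemma card_roots_toFinset_charpolyC_eq_iff {k : ℕ} (M : Matrix (Fin k) (Fin k) ℝ) :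
    (charpolyC M).roots.toFinset.card = k ↔ M.charpoly.Separable := by
  classical
  rw [← nodup_aroots_iff_of_splits (K := ℂ) M.charpoly_monic.ne_zero (IsAlgClosed.splits _),
    ← Multiset.toFinset_card_eq_card_iff_nodup, aroots_def, ← charpolyC,
    ← (IsAlgClosed.splits _).natDegree_eq_card_roots, charpolyC, natDegree_map,
    M.charpoly_natDegree_eq_dim, Fintype.card_fin]

lemma zero_mem_roots_charpolyC_iff {k : ℕ} (M : Matrix (Fin k) (Fin k) ℝ) :
    (0 : ℂ) ∈ (charpolyC M).roots ↔ M.charpoly.coeff 0 = 0 := by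
  rw [charpolyC, mem_roots (M.charpoly_monic.map _).ne_zero, IsRoot, ← coeff_zero_eq_eval_zero,
    coeff_map, Complex.coe_algebraMap, Complex.ofReal_eq_zero]

theorem stmt13_general (k : ℕ) (ρ : Fin k → ℝ)
    (P : Matrix (Fin k) (Fin k) ℝ)
    -- `P · diag(ρ)` has k distinct nonzero eigenvalues
    (hdist : (charpolyC (P * Matrix.diagonal ρ)).roots.toFinset.card = k)
    (hnz : (0 : ℂ) ∉ (charpolyC (P * Matrix.diagonal ρ)).roots) :
    ∃ Y : Set ℝ, Y.Finite ∧ ∀ y : ℝ, 0 < y → y ∉ Y →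
      (charpolyC (Pmat ρ P y)).roots.toFinset.card = k ∧
      (0 : ℂ) ∉ (charpolyC (Pmat ρ P y)).roots := by
  set A := P * Matrix.diagonal ρ
  set B := (P - Matrix.of fun _ _ ↦ 1) * Matrix.diagonal ρ
  set G := (A.map C + (X : ℝ[X]) • B.map C).charpoly
  have hPmat (y : ℝ) : (Pmat ρ P y).charpoly = G.map (evalRingHom y) := by
    rw [← Matrix.charpoly_add_smul_eq_map_evalRingHom]
    congr 1
    ext i j
    simp only [Pmat, Matrix.of_apply, Matrix.add_apply, Matrix.mul_diagonal, Matrix.smul_apply,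
      Matrix.sub_apply, smul_eq_mul, A, B]
    ring
  have hA : A.charpoly = G.map (evalRingHom 0) := by
    rw [← Matrix.charpoly_add_smul_eq_map_evalRingHom, zero_smul, add_zero]
  rw [card_roots_toFinset_charpolyC_eq_iff, hA] at hdist
  rw [zero_mem_roots_charpolyC_iff, hA] at hnz
  refine ⟨_, ((Matrix.charpoly_monic _).finite_setOf_not_separable_map_evalRingHom hdist).union
    (finite_setOf_coeff_map_evalRingHom_eq_zero hnz), fun y _ hy ↦ ?_⟩
  simp only [Set.mem_union, Set.mem_ofPred_eq, not_or, not_not] at hy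
  rw [card_roots_toFinset_charpolyC_eq_iff, zero_mem_roots_charpolyC_iff, hPmat]
  exact hy

theorem stmt13 (k : ℕ) (hk : 1 ≤ k) (ρ : Fin k → ℝ)
    (hρ : ∀ r, ρ r ∈ Set.Ioo (0 : ℝ) 1)
    (P : Matrix (Fin k) (Fin k) ℝ) (hPsymm : P.IsSymm)
    (hP : ∀ r s, P r s ∈ Set.Ioo (0 : ℝ) 1)
    -- `P · diag(ρ)` has k distinct nonzero eigenvalues
    (hdist : (charpolyC (P * Matrix.diagonal ρ)).roots.toFinset.card = k)
    (hnz : (0 : ℂ) ∉ (charpolyC (P * Matrix.diagonal ρ)).roots) :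
    ∃ Y : Set ℝ, Y.Finite ∧ ∀ y : ℝ, 0 < y → y ∉ Y →
      (charpolyC (Pmat ρ P y)).roots.toFinset.card = k ∧
      (0 : ℂ) ∉ (charpolyC (Pmat ρ P y)).roots :=
  stmt13_general k ρ P hdist hnz
end

section
/- Let n, r be positive integers, let y > 0, and let W ∈ ℝ^{n×r} be a fixed nonzero matrix. Let Z₁, …, Zₙ be independent random variables where, for each i, ℙ(Z_i = 1) = p_i, ℙ(Z_i = −y) = q_i, and ℙ(Z_i = 0) = 1 − p_i − q_i (with p_i, q_i ≥ 0, p_i + q_i ≤ 1), and let Z̄ ∈ ℝⁿ have coordinates Z̄_i = Z_i − 𝔼[Z_i]. Set M = max_i (p_i + q_i), ‖W‖_{2→∞} = max_i ‖W_{i·}‖₂ (maximum Euclidean norm of a row), and ‖W‖_F the Frobenius norm. Then for every β ≥ 0, ℙ( ‖Z̄ᵀ W‖₂ ≥ r · (max{1,y} (2+β) n / (1 ∨ ln( √n ‖W‖_{2→∞} / ‖W‖_F ))) · ‖W‖_{2→∞} · M ) ≤ 2r · exp( −β n M ). -/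
/-!
Fix a column `w` of `W` and write `m = max 1 y`, `a = ‖W‖_{2→∞}`, `F = ‖W‖_F` and
`L = max 1 (log (√n a / F))`. Each `w i (Zᵢ - 𝔼 Zᵢ)` is bounded by `2 m a`, so at the Chernoff
parameter `λ = L / (m a)` Bennett's inequality `eˣ ≤ 1 + x + x² e²ᴸ / (2L)²` (valid for `x ≤ 2L`)
bounds its moment generating function by `exp ((pᵢ + qᵢ) m² λ² wᵢ² e²ᴸ / (2L)²)`. Summing over `i`
and using the choice of `L`, namely `e²ᴸ F² ≤ e² n a²`, the exponent is at most `2nM`, whence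
`ℙ(|Z̄ᵀw| ≥ t) ≤ 2 exp (-βnM)` for `t = m (2 + β) n a M / L`. Since `‖v‖₂ ≤ ‖v‖₁ ≤ r maxⱼ |vⱼ|`,
a union bound over the `r` columns finishes the proof.
-/

open MeasureTheory ProbabilityTheory Real
open scoped Nat

namespace Real

lemma exp_le_one_add_add_sq_div_two {x : ℝ} (hx : x ≤ 0) : exp x ≤ 1 + x + x ^ 2 / 2 := by
  -- `exp x = 1 / exp (-x)`, and `1 + x + x ^ 2 / 2` times the cubic Taylor polynomial of
  -- `exp (-x)` is `1 - x ^ 3 / 6 + x ^ 4 / 12 - x ^ 5 / 12 ≥ 1`.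
  have hB : 1 + -x + (-x) ^ 2 / 2 + (-x) ^ 3 / 6 ≤ exp (-x) := by
    simpa [Finset.sum_range_succ, Nat.factorial] using
      sum_le_exp_of_nonneg (neg_nonneg.2 hx) 4
  have hinv : exp x * exp (-x) = 1 := by rw [← exp_add, add_neg_cancel, exp_zero]
  nlinarith [exp_pos x, pow_two_nonneg x, mul_nonneg (pow_two_nonneg x) (neg_nonneg.2 hx)]

lemma hasSum_pow_add_two_div_factorial (x : ℝ) :
    HasSum (fun n : ℕ => x ^ (n + 2) / (n + 2)!) (exp x - (1 + x)) := by
  have h := (hasSum_nat_add_iff' 2).2 (exp_eq_exp_ℝ ▸ NormedSpace.expSeries_div_hasSum_exp x)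
  simpa [Finset.sum_range_succ] using h

lemma exp_le_one_add_add_sq_mul_exp_div_sq {u x : ℝ} (hu : 0 < u) (hxu : x ≤ u) :
    exp x ≤ 1 + x + x ^ 2 * (exp u / u ^ 2) := by
  rcases le_or_gt x 0 with hx | hx
  · have hu2 : u ^ 2 / 2 ≤ exp u := by nlinarith [quadratic_le_exp_of_nonneg hu.le]
    have hhalf : 1 / 2 ≤ exp u / u ^ 2 := by rw [le_div_iff₀ (by positivity)]; linarith
    nlinarith [exp_le_one_add_add_sq_div_two hx, pow_two_nonneg x]
  · have hterm (n : ℕ) :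
        x ^ (n + 2) / (n + 2)! ≤ (x / u) ^ 2 * (u ^ (n + 2) / (n + 2)!) := by
      have hrw : (x / u) ^ 2 * (u ^ (n + 2) / (n + 2)!) = x ^ 2 * u ^ n / (n + 2)! := by
        field_simp
        ring
      rw [hrw]
      gcongr
      calc x ^ (n + 2) = x ^ 2 * x ^ n := by ring
        _ ≤ x ^ 2 * u ^ n := by gcongr
    have htail := hasSum_le hterm (hasSum_pow_add_two_div_factorial x)
      ((hasSum_pow_add_two_div_factorial u).mul_left ((x / u) ^ 2))
    have hxu2 : (x / u) ^ 2 * (exp u - (1 + u)) ≤ x ^ 2 * (exp u / u ^ 2) := by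
      calc (x / u) ^ 2 * (exp u - (1 + u)) ≤ (x / u) ^ 2 * exp u := by gcongr; linarith
        _ = x ^ 2 * (exp u / u ^ 2) := by ring
    linarith

lemma exp_two_le_eight : exp 2 ≤ 8 := by
  have := exp_one_lt_d9
  rw [show (2 : ℝ) = 1 + 1 by norm_num, exp_add]
  nlinarith [exp_pos 1]

end Real

section FiniteRange

variable {Ω α E : Type*} [MeasurableSpace Ω] {μ : Measure Ω} [NormedAddCommGroup E]
  {Z : Ω → α} {S : Finset α}

lemma comp_ae_eq_sum_indicator_preimage (hS : ∀ᵐ ω ∂μ, Z ω ∈ S) (g : α → E) :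
    (fun ω => g (Z ω)) =ᵐ[μ] fun ω => ∑ z ∈ S, (Z ⁻¹' {z}).indicator (fun _ => g z) ω := by
  filter_upwards [hS] with ω hω
  classical
  simp [Set.indicator_apply, hω]

variable [MeasurableSpace α] [MeasurableSingletonClass α] [IsFiniteMeasure μ]

lemma integrable_comp_of_ae_mem_finset (hZ : Measurable Z) (hS : ∀ᵐ ω ∂μ, Z ω ∈ S)
    (g : α → E) : Integrable (fun ω => g (Z ω)) μ :=
  (integrable_finsetSum S fun z _ =>
    (integrable_const (g z)).indicator (hZ (measurableSet_singleton z))).congr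
    (comp_ae_eq_sum_indicator_preimage hS g).symm

lemma integral_comp_of_ae_mem_finset [NormedSpace ℝ E] [CompleteSpace E]
    (hZ : Measurable Z) (hS : ∀ᵐ ω ∂μ, Z ω ∈ S) (g : α → E) :
    ∫ ω, g (Z ω) ∂μ = ∑ z ∈ S, μ.real (Z ⁻¹' {z}) • g z := by
  rw [integral_congr_ae (comp_ae_eq_sum_indicator_preimage hS g),
    integral_finsetSum S fun z _ =>
      (integrable_const (g z)).indicator (hZ (measurableSet_singleton z))]
  exact Finset.sum_congr rfl fun z _ =>
    integral_indicator_const _ (hZ (measurableSet_singleton z))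

end FiniteRange

structure IsThreePoint {Ω : Type*} [MeasurableSpace Ω] (μ : Measure Ω) (Z : Ω → ℝ)
    (y p q : ℝ) : Prop where
  measurable : Measurable Z
  p_nonneg : 0 ≤ p
  q_nonneg : 0 ≤ q
  add_le_one : p + q ≤ 1
  measure_preimage_one : μ (Z ⁻¹' {1}) = ENNReal.ofReal p
  measure_preimage_neg : μ (Z ⁻¹' {-y}) = ENNReal.ofReal q
  measure_preimage_zero : μ (Z ⁻¹' {0}) = ENNReal.ofReal (1 - p - q)

namespace IsThreePoint

variable {Ω : Type*} [MeasurableSpace Ω] {μ : Measure Ω} [IsProbabilityMeasure μ] {Z : Ω → ℝ}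
  {y p q : ℝ}

lemma ae_mem (h : IsThreePoint μ Z y p q) (hy : 0 < y) :
    ∀ᵐ ω ∂μ, Z ω ∈ ({1, -y, 0} : Finset ℝ) := by
  have hS := h.measurable (Finset.measurableSet ({1, -y, 0} : Finset ℝ))
  refine (ae_iff_measure_eq hS.nullMeasurableSet).2 ?_
  change μ (Z ⁻¹' ↑({1, -y, 0} : Finset ℝ)) = μ Set.univ
  have hq := h.q_nonneg
  have hpq := h.add_le_one
  rw [measure_univ, ← sum_measure_preimage_singleton _ fun z _ =>
      h.measurable (measurableSet_singleton z),
    Finset.sum_insert (by simp; linarith), Finset.sum_insert (by simpa using hy.ne'),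
    Finset.sum_singleton, h.measure_preimage_one, h.measure_preimage_neg, h.measure_preimage_zero,
    ← ENNReal.ofReal_add hq (by linarith), ← ENNReal.ofReal_add h.p_nonneg (by linarith),
    show p + (q + (1 - p - q)) = 1 by ring, ENNReal.ofReal_one]

lemma integral_comp (h : IsThreePoint μ Z y p q) (hy : 0 < y) (g : ℝ → ℝ) :
    ∫ ω, g (Z ω) ∂μ = p * g 1 + q * g (-y) + (1 - p - q) * g 0 := by
  have hq := h.q_nonneg
  have hpq := h.add_le_one
  rw [integral_comp_of_ae_mem_finset h.measurable (h.ae_mem hy),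
    Finset.sum_insert (by simp; linarith), Finset.sum_insert (by simpa using hy.ne'),
    Finset.sum_singleton, measureReal_def, measureReal_def, measureReal_def, h.measure_preimage_one,
    h.measure_preimage_neg, h.measure_preimage_zero, ENNReal.toReal_ofReal h.p_nonneg,
    ENNReal.toReal_ofReal hq, ENNReal.toReal_ofReal (by linarith)]
  simp only [smul_eq_mul]
  ring

lemma integral_eq (h : IsThreePoint μ Z y p q) (hy : 0 < y) : μ[Z] = p - y * q :=
  (h.integral_comp hy id).trans (by simp only [id]; ring)

lemma integrable_comp (h : IsThreePoint μ Z y p q) (hy : 0 < y) (g : ℝ → ℝ) :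
    Integrable (fun ω => g (Z ω)) μ :=
  integrable_comp_of_ae_mem_finset h.measurable (h.ae_mem hy) g

lemma mgf_sub_integral_le (h : IsThreePoint μ Z y p q) (hy : 0 < y) {m u θ : ℝ} (hm : 1 ≤ m)
    (hym : y ≤ m) (hu : 0 < u) (hθ : |θ| * (2 * m) ≤ u) :
    mgf (fun ω => Z ω - μ[Z]) μ θ ≤ exp ((p + q) * m ^ 2 * θ ^ 2 * (exp u / u ^ 2)) := by
  have hp := h.p_nonneg
  have hq := h.q_nonneg
  have hpq := h.add_le_one
  rw [mgf, h.integral_eq hy]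
  set c := p - y * q with hc
  set D := exp u / u ^ 2
  have hbennett (z : ℝ) (hz : |z - c| ≤ 2 * m) :
      exp (θ * (z - c)) ≤ 1 + θ * (z - c) + (θ * (z - c)) ^ 2 * D := by
    refine exp_le_one_add_add_sq_mul_exp_div_sq hu ?_
    calc θ * (z - c) ≤ |θ| * |z - c| := by rw [← abs_mul]; exact le_abs_self _
      _ ≤ |θ| * (2 * m) := by gcongr
      _ ≤ u := hθ
  have h1 := hbennett 1 (by rw [abs_le]; constructor <;> nlinarith)
  have h2 := hbennett (-y) (by rw [abs_le]; constructor <;> nlinarith)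
  have h3 := hbennett 0 (by rw [abs_le]; constructor <;> nlinarith)
  have hvar : p + y ^ 2 * q - c ^ 2 ≤ (p + q) * m ^ 2 := by
    have hy2 : y ^ 2 ≤ m ^ 2 := by gcongr
    nlinarith [sq_nonneg c, mul_le_mul_of_nonneg_right hy2 hq, one_le_pow₀ (n := 2) hm]
  calc ∫ ω, exp (θ * (Z ω - c)) ∂μ
      = p * exp (θ * (1 - c)) + q * exp (θ * (-y - c)) + (1 - p - q) * exp (θ * (0 - c)) :=
        h.integral_comp hy fun z => exp (θ * (z - c))
    _ ≤ p * (1 + θ * (1 - c) + (θ * (1 - c)) ^ 2 * D)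
        + q * (1 + θ * (-y - c) + (θ * (-y - c)) ^ 2 * D)
        + (1 - p - q) * (1 + θ * (0 - c) + (θ * (0 - c)) ^ 2 * D) := by
        gcongr; linarith
    _ = 1 + (p + y ^ 2 * q - c ^ 2) * θ ^ 2 * D := by rw [hc]; ring
    _ ≤ 1 + (p + q) * m ^ 2 * θ ^ 2 * D := by gcongr
    _ ≤ exp ((p + q) * m ^ 2 * θ ^ 2 * D) := by
        linarith [add_one_le_exp ((p + q) * m ^ 2 * θ ^ 2 * D)]

end IsThreePoint

lemma measureReal_sum_ge_le_exp_of_mgf_le {Ω ι : Type*} [MeasurableSpace Ω] {μ : Measure Ω}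
    [IsFiniteMeasure μ] [Fintype ι] {X : ι → Ω → ℝ} (hindep : iIndepFun X μ)
    (hmeas : ∀ i, Measurable (X i)) {t : ℝ} (ht : 0 ≤ t)
    (hint : ∀ i, Integrable (fun ω => exp (t * X i ω)) μ) {K : ι → ℝ}
    (hK : ∀ i, mgf (X i) μ t ≤ exp (K i)) (ε : ℝ) :
    μ.real {ω | ε ≤ ∑ i, X i ω} ≤ exp (-t * ε + ∑ i, K i) := by
  have hchernoff := measure_ge_le_exp_mul_mgf (X := ∑ i, X i) ε ht
    (hindep.integrable_exp_mul_sum hmeas fun i _ => hint i)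
  simp only [Finset.sum_apply] at hchernoff
  calc μ.real {ω | ε ≤ ∑ i, X i ω}
      ≤ exp (-t * ε) * ∏ i, mgf (X i) μ t := by rwa [← hindep.mgf_sum hmeas]
    _ ≤ exp (-t * ε) * ∏ i, exp (K i) := by
        gcongr with i
        · exact fun i _ => mgf_nonneg
        · exact hK i
    _ = exp (-t * ε + ∑ i, K i) := by rw [exp_add, exp_sum]

section WeightedSum

variable {Ω : Type*} [MeasurableSpace Ω] {μ : Measure Ω} [IsProbabilityMeasure μ] {n : ℕ}
  {Z : Fin n → Ω → ℝ} {y : ℝ} {p q : Fin n → ℝ}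

lemma measureReal_sum_sub_integral_mul_ge_le (hy : 0 < y)
    (hZ : ∀ i, IsThreePoint μ (Z i) y (p i) (q i)) (hindep : iIndepFun Z μ)
    {m a F L M β : ℝ} (hm : 1 ≤ m) (hym : y ≤ m) (ha : 0 < a) (hL : 1 ≤ L)
    (hFL : exp (2 * L) * F ^ 2 ≤ exp 2 * (n * a ^ 2)) (hM : 0 ≤ M) (hpqM : ∀ i, p i + q i ≤ M)
    {w : Fin n → ℝ} (hwa : ∀ i, |w i| ≤ a) (hwF : ∑ i, w i ^ 2 ≤ F ^ 2) :
    μ.real {ω | m * (2 + β) * n / L * a * M ≤ ∑ i, (Z i ω - μ[Z i]) * w i}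
      ≤ exp (-β * n * M) := by

  set lam := L / (m * a) with hlam
  set D := exp (2 * L) / (2 * L) ^ 2 with hD
  set X : Fin n → Ω → ℝ := fun i ω => w i * (Z i ω - μ[Z i])
  set K : Fin n → ℝ := fun i => (p i + q i) * m ^ 2 * (w i * lam) ^ 2 * D
  have hmgf (i : Fin n) : mgf (X i) μ lam ≤ exp (K i) := by
    rw [mgf_const_mul]
    refine (hZ i).mgf_sub_integral_le hy hm hym (by positivity) ?_
    calc |w i * lam| * (2 * m) = |w i| * (2 * L / a) := by
          rw [abs_mul, abs_of_pos (by positivity : 0 < lam), hlam]; field_simp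
      _ ≤ a * (2 * L / a) := by gcongr; exact hwa i
      _ = 2 * L := by field_simp
  have hsumK : ∑ i, K i ≤ 2 * n * M := by
    calc ∑ i, K i ≤ ∑ i, M * m ^ 2 * lam ^ 2 * D * w i ^ 2 := by
          gcongr with i
          calc K i = (p i + q i) * (m ^ 2 * lam ^ 2 * D * w i ^ 2) := by ring
            _ ≤ M * (m ^ 2 * lam ^ 2 * D * w i ^ 2) := by gcongr; exact hpqM i
            _ = M * m ^ 2 * lam ^ 2 * D * w i ^ 2 := by ring
      _ = M * m ^ 2 * lam ^ 2 * D * ∑ i, w i ^ 2 := by rw [Finset.mul_sum]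
      _ ≤ M * m ^ 2 * lam ^ 2 * D * F ^ 2 := by gcongr
      _ = M / (4 * a ^ 2) * (exp (2 * L) * F ^ 2) := by rw [hlam, hD]; field_simp; ring
      _ ≤ M / (4 * a ^ 2) * (exp 2 * (n * a ^ 2)) := by gcongr
      _ = exp 2 / 4 * n * M := by field_simp
      _ ≤ 2 * n * M := by gcongr; linarith [exp_two_le_eight]
  have hthreshold : lam * (m * (2 + β) * n / L * a * M) = (2 + β) * n * M := by
    rw [hlam]; field_simp
  calc μ.real {ω | m * (2 + β) * n / L * a * M ≤ ∑ i, (Z i ω - μ[Z i]) * w i}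
      = μ.real {ω | m * (2 + β) * n / L * a * M ≤ ∑ i, X i ω} := by
        simp only [X, mul_comm (w _)]
    _ ≤ exp (-lam * (m * (2 + β) * n / L * a * M) + ∑ i, K i) :=
        measureReal_sum_ge_le_exp_of_mgf_le
          (hindep.comp (fun i z => w i * (z - μ[Z i])) fun i => by fun_prop)
          (fun i => ((hZ i).measurable.sub_const _).const_mul _) (by positivity)
          (fun i => (hZ i).integrable_comp hy fun z => exp (lam * (w i * (z - μ[Z i])))) hmgf _
    _ ≤ exp (-β * n * M) := by
        gcongr
        rw [neg_mul, hthreshold]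
        linarith

lemma measureReal_abs_sum_sub_integral_mul_ge_le (hy : 0 < y)
    (hZ : ∀ i, IsThreePoint μ (Z i) y (p i) (q i)) (hindep : iIndepFun Z μ)
    {m a F L M β : ℝ} (hm : 1 ≤ m) (hym : y ≤ m) (ha : 0 < a) (hL : 1 ≤ L)
    (hFL : exp (2 * L) * F ^ 2 ≤ exp 2 * (n * a ^ 2)) (hM : 0 ≤ M) (hpqM : ∀ i, p i + q i ≤ M)
    {w : Fin n → ℝ} (hwa : ∀ i, |w i| ≤ a) (hwF : ∑ i, w i ^ 2 ≤ F ^ 2) :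
    μ.real {ω | m * (2 + β) * n / L * a * M ≤ |∑ i, (Z i ω - μ[Z i]) * w i|}
      ≤ 2 * exp (-β * n * M) := by
  have hpos := measureReal_sum_sub_integral_mul_ge_le (β := β) hy hZ hindep hm hym ha hL hFL hM
    hpqM hwa hwF
  have hneg := measureReal_sum_sub_integral_mul_ge_le (β := β) (w := -w) hy hZ hindep hm hym ha
    hL hFL hM hpqM (by simpa using hwa) (by simpa using hwF)
  calc μ.real {ω | m * (2 + β) * n / L * a * M ≤ |∑ i, (Z i ω - μ[Z i]) * w i|}
      ≤ μ.real ({ω | m * (2 + β) * n / L * a * M ≤ ∑ i, (Z i ω - μ[Z i]) * w i}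
          ∪ {ω | m * (2 + β) * n / L * a * M ≤ ∑ i, (Z i ω - μ[Z i]) * (-w) i}) := by
        refine measureReal_mono fun ω hω => ?_
        simpa [le_abs, Finset.sum_neg_distrib] using hω
    _ ≤ _ := measureReal_union_le _ _
    _ ≤ 2 * exp (-β * n * M) := by linarith

end WeightedSum

lemma exists_le_abs_of_card_mul_le_sqrt_sum_sq {ι : Type*} [Fintype ι] [Nonempty ι]
    {v : ι → ℝ} {t : ℝ} (h : Fintype.card ι * t ≤ sqrt (∑ i, v i ^ 2)) : ∃ i, t ≤ |v i| := by
  have hl1 : sqrt (∑ i, v i ^ 2) ≤ ∑ i, |v i| := by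
    rw [sqrt_le_left (Finset.sum_nonneg fun i _ => abs_nonneg _)]
    simpa using Finset.sum_sq_le_sq_sum_of_nonneg (s := Finset.univ) (f := fun i => |v i|)
      fun i _ => abs_nonneg _
  obtain ⟨i, -, hi⟩ := Finset.exists_le_of_sum_le Finset.univ_nonempty
    (f := fun _ => t) (g := fun i => |v i|) (by simpa using h.trans hl1)
  exact ⟨i, hi⟩

lemma exp_two_mul_max_one_log_div_mul_sq_le {F b : ℝ} (hF : 0 < F) (hFb : F ≤ b) :
    exp (2 * max 1 (log (b / F))) * F ^ 2 ≤ exp 2 * b ^ 2 := by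
  rcases max_cases 1 (log (b / F)) with ⟨h, -⟩ | ⟨h, -⟩ <;> rw [h]
  · rw [mul_one]
    gcongr
  · rw [two_mul, exp_add, exp_log (div_pos (hF.trans_le hFb) hF)]
    field_simp
    nlinarith [one_le_exp (zero_le_two (α := ℝ)), sq_nonneg b]

section RowNorm

variable {ι κ : Type*} [Fintype ι] [Fintype κ] (W : Matrix ι κ ℝ)
  (h : (Finset.univ : Finset ι).Nonempty)

lemma abs_le_sup'_sqrt_sum_sq (i : ι) (j : κ) :
    |W i j| ≤ Finset.univ.sup' h fun i => sqrt (∑ j, W i j ^ 2) := by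
  calc |W i j| = sqrt (W i j ^ 2) := (sqrt_sq_eq_abs _).symm
    _ ≤ sqrt (∑ j, W i j ^ 2) := by
        gcongr
        exact Finset.single_le_sum (f := fun j => W i j ^ 2) (fun j _ => sq_nonneg _)
          (Finset.mem_univ j)
    _ ≤ _ := Finset.le_sup' (fun i => sqrt (∑ j, W i j ^ 2)) (Finset.mem_univ i)

lemma sqrt_sum_sum_sq_le_sqrt_card_mul_sup' :
    sqrt (∑ i, ∑ j, W i j ^ 2)
      ≤ sqrt (Fintype.card ι) * Finset.univ.sup' h fun i => sqrt (∑ j, W i j ^ 2) := by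
  set a := Finset.univ.sup' h fun i => sqrt (∑ j, W i j ^ 2)
  have hrow (i : ι) : sqrt (∑ j, W i j ^ 2) ≤ a :=
    Finset.le_sup' (fun i => sqrt (∑ j, W i j ^ 2)) (Finset.mem_univ i)
  have hrow_sq (i : ι) : ∑ j, W i j ^ 2 ≤ a ^ 2 := by
    rw [← sq_sqrt (Finset.sum_nonneg fun j _ => sq_nonneg (W i j))]
    gcongr
    exact hrow i
  rw [← sqrt_sq ((sqrt_nonneg _).trans (hrow h.choose)), ← sqrt_mul (Nat.cast_nonneg _)]
  gcongr
  simpa using Finset.sum_le_card_nsmul Finset.univ _ _ fun i _ => hrow_sq i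

end RowNorm

lemma sum_sq_le_sum_sum_sq {ι κ : Type*} [Fintype ι] [Fintype κ] (W : Matrix ι κ ℝ) (j : κ) :
    ∑ i, W i j ^ 2 ≤ ∑ i, ∑ k, W i k ^ 2 :=
  Finset.sum_le_sum fun i _ => Finset.single_le_sum (f := fun j => W i j ^ 2)
    (fun _ _ => sq_nonneg _) (Finset.mem_univ j)

lemma sum_sum_sq_pos {ι κ : Type*} [Fintype ι] [Fintype κ] {W : Matrix ι κ ℝ} (hW : W ≠ 0) :
    0 < ∑ i, ∑ j, W i j ^ 2 := by
  obtain ⟨i, j, hij⟩ : ∃ i j, W i j ≠ 0 := by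
    by_contra! h
    exact hW (Matrix.ext h)
  calc 0 < W i j ^ 2 := by positivity
    _ ≤ ∑ i, W i j ^ 2 := Finset.single_le_sum (f := fun i => W i j ^ 2)
        (fun _ _ => sq_nonneg _) (Finset.mem_univ i)
    _ ≤ _ := sum_sq_le_sum_sum_sq W j

theorem stmt16_general (n r : ℕ) (hn : 0 < n) (hr : 0 < r) (y : ℝ) (hy : 0 < y)
    (W : Matrix (Fin n) (Fin r) ℝ) (hW : W ≠ 0)
    (Ω : Type) (mΩ : MeasurableSpace Ω) (μ : Measure Ω) [IsProbabilityMeasure μ]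
    (Z : Fin n → Ω → ℝ) (p q : Fin n → ℝ)
    (hp : ∀ i, 0 ≤ p i) (hq : ∀ i, 0 ≤ q i) (hpq : ∀ i, p i + q i ≤ 1)
    (hmeas : ∀ i, Measurable (Z i))
    (hindep : ProbabilityTheory.iIndepFun Z μ)
    (hd1 : ∀ i, μ {ω | Z i ω = 1} = ENNReal.ofReal (p i))
    (hd2 : ∀ i, μ {ω | Z i ω = -y} = ENNReal.ofReal (q i))
    (hd3 : ∀ i, μ {ω | Z i ω = 0} = ENNReal.ofReal (1 - p i - q i))
    (β : ℝ) :
    -- notation: M = maxᵢ (pᵢ + qᵢ), ‖W‖_{2→∞} = max row ℓ²-norm, ‖W‖_F = Frobenius norm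
    μ {ω |
        (r : ℝ) *
            (max 1 y * (2 + β) * n /
              max 1 (Real.log (Real.sqrt n *
                  (Finset.univ.sup' (Finset.univ_nonempty_iff.mpr ⟨⟨0, hn⟩⟩)
                    fun i => Real.sqrt (∑ j, W i j ^ 2)) /
                Real.sqrt (∑ i, ∑ j, W i j ^ 2)))) *
            (Finset.univ.sup' (Finset.univ_nonempty_iff.mpr ⟨⟨0, hn⟩⟩)
              fun i => Real.sqrt (∑ j, W i j ^ 2)) *
            (Finset.univ.sup' (Finset.univ_nonempty_iff.mpr ⟨⟨0, hn⟩⟩)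
              fun i => p i + q i) ≤
          Real.sqrt (∑ j, (∑ i, (Z i ω - ∫ ω', Z i ω' ∂μ) * W i j) ^ 2)}
      ≤ ENNReal.ofReal (2 * r * Real.exp (-β * n *
          (Finset.univ.sup' (Finset.univ_nonempty_iff.mpr ⟨⟨0, hn⟩⟩)
            fun i => p i + q i))) := by
  set hne : (Finset.univ : Finset (Fin n)).Nonempty := Finset.univ_nonempty_iff.mpr ⟨⟨0, hn⟩⟩
  set a := Finset.univ.sup' hne fun i => sqrt (∑ j, W i j ^ 2)
  set M := Finset.univ.sup' hne fun i => p i + q i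
  set F := sqrt (∑ i, ∑ j, W i j ^ 2)
  set t := max 1 y * (2 + β) * n / max 1 (log (sqrt n * a / F)) * a * M
  have hZ (i : Fin n) : IsThreePoint μ (Z i) y (p i) (q i) :=
    ⟨hmeas i, hp i, hq i, hpq i, hd1 i, hd2 i, hd3 i⟩
  have hF : 0 < F := sqrt_pos.2 (sum_sum_sq_pos hW)
  have hFa : F ≤ sqrt n * a := by simpa using sqrt_sum_sum_sq_le_sqrt_card_mul_sup' W hne
  have ha : 0 < a := pos_of_mul_pos_right (hF.trans_le hFa) (sqrt_nonneg _)
  have hM : 0 ≤ M :=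
    (add_nonneg (hp ⟨0, hn⟩) (hq _)).trans (Finset.le_sup' (fun i => p i + q i) (Finset.mem_univ _))
  have hcol (j : Fin r) :
      μ.real {ω | t ≤ |∑ i, (Z i ω - μ[Z i]) * W i j|} ≤ 2 * exp (-β * n * M) :=
    measureReal_abs_sum_sub_integral_mul_ge_le hy hZ hindep (le_max_left 1 y)
      (le_max_right 1 y) ha (le_max_left _ _)
      (by simpa [mul_pow] using exp_two_mul_max_one_log_div_mul_sq_le hF hFa) hM
      (fun i => Finset.le_sup' (fun i => p i + q i) (Finset.mem_univ i))
      (fun i => abs_le_sup'_sqrt_sum_sq W hne i j)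
      (by simpa [F, sq_sqrt (sum_sum_sq_pos hW).le] using sum_sq_le_sum_sum_sq W j)
  have : Nonempty (Fin r) := Fin.pos_iff_nonempty.1 hr
  rw [ENNReal.le_ofReal_iff_toReal_le (measure_ne_top _ _) (by positivity), ← measureReal_def]
  calc _ ≤ μ.real (⋃ j, {ω | t ≤ |∑ i, (Z i ω - μ[Z i]) * W i j|}) :=
        measureReal_mono fun ω hω => Set.mem_iUnion.2 <|
          exists_le_abs_of_card_mul_le_sqrt_sum_sq (by simpa [t, mul_assoc] using hω)
    _ ≤ ∑ j, μ.real {ω | t ≤ |∑ i, (Z i ω - μ[Z i]) * W i j|} := measureReal_iUnion_fintype_le _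
    _ ≤ ∑ _j : Fin r, 2 * exp (-β * n * M) := Finset.sum_le_sum fun j _ => hcol j
    _ = 2 * r * exp (-β * n * M) := by
        simp only [Finset.sum_const, Finset.card_univ, Fintype.card_fin, nsmul_eq_mul]
        ring

theorem stmt16 (n r : ℕ) (hn : 0 < n) (hr : 0 < r) (y : ℝ) (hy : 0 < y)
    (W : Matrix (Fin n) (Fin r) ℝ) (hW : W ≠ 0)
    (Ω : Type) (mΩ : MeasurableSpace Ω) (μ : Measure Ω) [IsProbabilityMeasure μ]
    (Z : Fin n → Ω → ℝ) (p q : Fin n → ℝ)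
    (hp : ∀ i, 0 ≤ p i) (hq : ∀ i, 0 ≤ q i) (hpq : ∀ i, p i + q i ≤ 1)
    (hmeas : ∀ i, Measurable (Z i))
    (hindep : ProbabilityTheory.iIndepFun Z μ)
    (hd1 : ∀ i, μ {ω | Z i ω = 1} = ENNReal.ofReal (p i))
    (hd2 : ∀ i, μ {ω | Z i ω = -y} = ENNReal.ofReal (q i))
    (hd3 : ∀ i, μ {ω | Z i ω = 0} = ENNReal.ofReal (1 - p i - q i))
    (β : ℝ) (hβ : 0 ≤ β) :
    -- notation: M = maxᵢ (pᵢ + qᵢ), ‖W‖_{2→∞} = max row ℓ²-norm, ‖W‖_F = Frobenius norm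
    μ {ω |
        (r : ℝ) *
            (max 1 y * (2 + β) * n /
              max 1 (Real.log (Real.sqrt n *
                  (Finset.univ.sup' (Finset.univ_nonempty_iff.mpr ⟨⟨0, hn⟩⟩)
                    fun i => Real.sqrt (∑ j, W i j ^ 2)) /
                Real.sqrt (∑ i, ∑ j, W i j ^ 2)))) *
            (Finset.univ.sup' (Finset.univ_nonempty_iff.mpr ⟨⟨0, hn⟩⟩)
              fun i => Real.sqrt (∑ j, W i j ^ 2)) *
            (Finset.univ.sup' (Finset.univ_nonempty_iff.mpr ⟨⟨0, hn⟩⟩)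
              fun i => p i + q i) ≤
          Real.sqrt (∑ j, (∑ i, (Z i ω - ∫ ω', Z i ω' ∂μ) * W i j) ^ 2)}
      ≤ ENNReal.ofReal (2 * r * Real.exp (-β * n *
          (Finset.univ.sup' (Finset.univ_nonempty_iff.mpr ⟨⟨0, hn⟩⟩)
            fun i => p i + q i))) :=
  stmt16_general n r hn hr y hy W hW Ω mΩ μ Z p q hp hq hpq hmeas hindep hd1 hd2 hd3 β
end

section
/- Let n, r be positive integers and let W ∈ ℝ^{n×r} be a matrix all of whose columns w₁, …, w_r are nonzero. Then Σ_{j=1}^r ‖w_j‖_∞ / ( 1 ∨ ln( √n ‖w_j‖_∞ / ‖w_j‖₂ ) ) ≤ r ‖W‖_{2→∞} / ( 1 ∨ ln( √n ‖W‖_{2→∞} / ‖W‖_F ) ). -/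
open Real Finset

lemma key17 (a a' b b' c : ℝ) (ha : 0 < a) (haa : a ≤ a') (hb : 0 < b) (hbb : b ≤ b')
    (hc : 0 < c) :
    a / max 1 (Real.log (c * a / b)) ≤ a' / max 1 (Real.log (c * a' / b')) := by
  have ha' : 0 < a' := ha.trans_le haa
  have hb' : 0 < b' := hb.trans_le hbb
  have hD : (0:ℝ) < max 1 (Real.log (c * a / b)) :=
    lt_of_lt_of_le one_pos (le_max_left _ _)
  have hD' : (0:ℝ) < max 1 (Real.log (c * a' / b')) :=
    lt_of_lt_of_le one_pos (le_max_left _ _)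
  rw [div_le_div_iff₀ hD hD']
  set D := max 1 (Real.log (c * a / b)) with hDdef
  have hD1 : (1:ℝ) ≤ D := le_max_left _ _
  have ht : 0 ≤ Real.log (a' / a) := Real.log_nonneg ((one_le_div ha).mpr haa)
  have h1 : Real.log (c * a' / b') ≤ Real.log (c * a' / b) :=
    Real.log_le_log (by positivity) (by gcongr)
  have h2 : Real.log (c * a' / b) = Real.log (c * a / b) + Real.log (a' / a) := by
    rw [← Real.log_mul (by positivity) (by positivity)]
    congr 1
    field_simp
  have h3 : max 1 (Real.log (c * a' / b')) ≤ D + Real.log (a' / a) := by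
    apply max_le
    · linarith
    · calc Real.log (c * a' / b') ≤ Real.log (c * a / b) + Real.log (a' / a) := by
            rw [← h2]; exact h1
        _ ≤ D + Real.log (a' / a) := by
            have := le_max_right 1 (Real.log (c * a / b)); linarith
  have h4 : a * Real.log (a' / a) ≤ a' - a := by
    have hlog : Real.log (a' / a) ≤ a' / a - 1 :=
      Real.log_le_sub_one_of_pos (div_pos ha' ha)
    have : a * (a' / a - 1) = a' - a := by field_simp
    nlinarith
  calc a * max 1 (Real.log (c * a' / b')) ≤ a * (D + Real.log (a' / a)) := by
        exact mul_le_mul_of_nonneg_left h3 ha.le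
    _ = a * D + a * Real.log (a' / a) := by ring
    _ ≤ a * D + (a' - a) := by linarith
    _ ≤ a * D + (a' - a) * D := by nlinarith
    _ = a' * D := by ring

theorem stmt17 (n r : ℕ) (hn : 0 < n) (hr : 0 < r)
    (W : Matrix (Fin n) (Fin r) ℝ)
    (hcols : ∀ j : Fin r, ∃ i : Fin n, W i j ≠ 0) :
    -- ∑_j ‖w_j‖_∞ / (1 ∨ ln(√n ‖w_j‖_∞ / ‖w_j‖₂))
    --   ≤ r ‖W‖_{2→∞} / (1 ∨ ln(√n ‖W‖_{2→∞} / ‖W‖_F))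
    (∑ j : Fin r,
        (Finset.univ.sup' (Finset.univ_nonempty_iff.mpr ⟨⟨0, hn⟩⟩) fun i => |W i j|) /
          max 1 (Real.log (Real.sqrt n *
              (Finset.univ.sup' (Finset.univ_nonempty_iff.mpr ⟨⟨0, hn⟩⟩) fun i => |W i j|) /
            Real.sqrt (∑ i, W i j ^ 2)))) ≤
      (r : ℝ) *
          (Finset.univ.sup' (Finset.univ_nonempty_iff.mpr ⟨⟨0, hn⟩⟩)
            fun i => Real.sqrt (∑ j, W i j ^ 2)) /
        max 1 (Real.log (Real.sqrt n *
            (Finset.univ.sup' (Finset.univ_nonempty_iff.mpr ⟨⟨0, hn⟩⟩)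
              fun i => Real.sqrt (∑ j, W i j ^ 2)) /
          Real.sqrt (∑ i, ∑ j, W i j ^ 2))) := by
  have hne : (Finset.univ_nonempty_iff (α := Fin n)).mpr ⟨⟨0, hn⟩⟩ =
      (Finset.univ_nonempty_iff (α := Fin n)).mpr ⟨⟨0, hn⟩⟩ := rfl
  set ne1 := (Finset.univ_nonempty_iff (α := Fin n)).mpr ⟨⟨0, hn⟩⟩
  set M := Finset.univ.sup' ne1 (fun i => Real.sqrt (∑ j, W i j ^ 2)) with hM
  set F := Real.sqrt (∑ i, ∑ j, W i j ^ 2) with hF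
  have hc : (0:ℝ) < Real.sqrt n := Real.sqrt_pos.mpr (by exact_mod_cast hn)
  have hterm : ∀ j : Fin r,
      (Finset.univ.sup' ne1 fun i => |W i j|) /
        max 1 (Real.log (Real.sqrt n * (Finset.univ.sup' ne1 fun i => |W i j|) /
          Real.sqrt (∑ i, W i j ^ 2))) ≤
      M / max 1 (Real.log (Real.sqrt n * M / F)) := by
    intro j
    obtain ⟨i0, hi0⟩ := hcols j
    set a := Finset.univ.sup' ne1 (fun i => |W i j|) with haeq
    set b := Real.sqrt (∑ i, W i j ^ 2) with hbeq
    have ha : 0 < a := lt_of_lt_of_le (abs_pos.mpr hi0)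
      (Finset.le_sup' (fun i => |W i j|) (Finset.mem_univ i0))
    have hbpos : 0 < b := Real.sqrt_pos.mpr
      (Finset.sum_pos' (fun i _ => sq_nonneg _)
        ⟨i0, Finset.mem_univ i0, by positivity⟩)
    have haM : a ≤ M := by
      apply Finset.sup'_le
      intro i _
      calc |W i j| = Real.sqrt ((W i j) ^ 2) := (Real.sqrt_sq_eq_abs _).symm
        _ ≤ Real.sqrt (∑ j', W i j' ^ 2) := Real.sqrt_le_sqrt
            (Finset.single_le_sum (f := fun j' => W i j' ^ 2) (fun j' _ => sq_nonneg _) (Finset.mem_univ j))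
        _ ≤ M := Finset.le_sup' (fun i => Real.sqrt (∑ j', W i j' ^ 2)) (Finset.mem_univ i)
    have hbF : b ≤ F := Real.sqrt_le_sqrt
      (Finset.sum_le_sum (fun i _ =>
        Finset.single_le_sum (fun j' _ => sq_nonneg (W i j')) (Finset.mem_univ j)))
    exact key17 a M b F (Real.sqrt n) ha haM hbpos hbF hc
  calc (∑ j : Fin r, (Finset.univ.sup' ne1 fun i => |W i j|) /
        max 1 (Real.log (Real.sqrt n * (Finset.univ.sup' ne1 fun i => |W i j|) /
          Real.sqrt (∑ i, W i j ^ 2))))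
      ≤ ∑ j : Fin r, M / max 1 (Real.log (Real.sqrt n * M / F)) :=
        Finset.sum_le_sum (fun j _ => hterm j)
    _ = (r : ℝ) * (M / max 1 (Real.log (Real.sqrt n * M / F))) := by
        rw [Finset.sum_const, Finset.card_univ, Fintype.card_fin, nsmul_eq_mul]
    _ = (r : ℝ) * M / max 1 (Real.log (Real.sqrt n * M / F)) := by ring
end
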